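/- arXiv:1908.11812 — 6 statements merged into one kernel-verified Lean document; each statement's English description precedes it below -/
import Mathlib

section
/- If g : (0,∞) → (0,∞) satisfies g(t) = t · g(1/t) for all t > 0 and g(t) = t/(1+t), then for any a ∈ ℝ and any symmetric probability density μ on ℝ (i.e. μ(z) = μ(-z)), the integral ∫_{ℝ} g(exp(a·z)) μ(z) dz = 1/2. -/
open MeasureTheory Real

/-!
On exponentials the balancing function is the logistic sigmoid, `g (exp x) = σ x`, and
`σ x + σ (-x) = 1`. Reflecting `z ↦ -z` leaves a symmetric density unchanged, so
`∫ σ (a z) μ z` equals `∫ σ (-a z) μ z`; their sum is `∫ μ = 1`.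
-/

theorem Real.exp_div_one_add_exp (x : ℝ) : exp x / (1 + exp x) = sigmoid x := by
  rw [sigmoid_def, exp_neg]
  field_simp
  ring

theorem MeasureTheory.integral_mul_of_even_of_add_comp_neg_eq
    {G : Type*} [MeasurableSpace G] [AddGroup G] [MeasurableNeg G]
    {ν : Measure G} [ν.IsNegInvariant] {f p : G → ℝ} {c : ℝ}
    (hp : Function.Even p) (hfp : Integrable (fun x => f x * p x) ν)
    (hf : ∀ x, f x + f (-x) = c) :
    ∫ x, f x * p x ∂ν = c / 2 * ∫ x, p x ∂ν := by
  have hreflect : ∫ x, f (-x) * p x ∂ν = ∫ x, f x * p x ∂ν := by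
    simpa only [hp _] using integral_neg_eq_self (fun x => f x * p x) ν
  have hsum : ∫ x, f x * p x ∂ν + ∫ x, f (-x) * p x ∂ν = c * ∫ x, p x ∂ν := by
    rw [← integral_add hfp (by simpa only [hp _] using hfp.comp_neg), ← integral_const_mul]
    simp only [← add_mul, hf]
  linarith

theorem barker_normalising_constant_general
    (g : ℝ → ℝ) (hg : ∀ t > (0:ℝ), g t = t / (1 + t))
    (μ : ℝ → ℝ)
    (hμ_int : Integrable μ) (hμ_prob : ∫ z, μ z = 1)
    (hμ_symm : ∀ z, μ z = μ (-z)) (a : ℝ) :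
    ∫ z, g (Real.exp (a * z)) * μ z = 1 / 2 := by
  have hg_exp : ∀ z, g (exp (a * z)) = sigmoid (a * z) := fun z => by
    rw [hg _ (exp_pos _), exp_div_one_add_exp]
  have hint : Integrable (fun z => sigmoid (a * z) * μ z) :=
    hμ_int.bdd_mul (c := 1)
      (by fun_prop : Continuous fun z => sigmoid (a * z)).aestronglyMeasurable
      (.of_forall fun z => by
        rw [norm_of_nonneg (sigmoid_nonneg _)]; exact sigmoid_le_one _)
  simp only [hg_exp]
  rw [integral_mul_of_even_of_add_comp_neg_eq (c := 1) (fun z => (hμ_symm z).symm) hint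
    (fun z => by rw [mul_neg, sigmoid_neg]; ring), hμ_prob]
  norm_num

/-- The normalizing constant of the Barker proposal with balancing function
`g(t) = t/(1+t)` equals `1/2`, for any symmetric probability density `μ` on `ℝ`
and any gradient value `a`. -/
theorem barker_normalising_constant
    (g : ℝ → ℝ) (hg : ∀ t > (0:ℝ), g t = t / (1 + t))
    (hbal : ∀ t > (0:ℝ), g t = t * g (1 / t))
    (μ : ℝ → ℝ) (hμ_meas : Measurable μ) (hμ_nonneg : ∀ z, 0 ≤ μ z)
    (hμ_int : Integrable μ) (hμ_prob : ∫ z, μ z = 1)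
    (hμ_symm : ∀ z, μ z = μ (-z)) (a : ℝ) :
    ∫ z, g (Real.exp (a * z)) * μ z = 1 / 2 :=
  barker_normalising_constant_general g hg μ hμ_int hμ_prob hμ_symm a
end

section
/- Let P₁ and P₂ be Metropolis–Hastings kernels on ℝ^d with candidate densities q₁, q₂ and common target density π. If there exists γ > 0 such that q₁(x,y) ≥ γ·q₂(x,y) for all x ≠ y, then for every f with ∫ f dπ = 0 and ∫ f² dπ = 1, the Dirichlet form satisfies (1/2)∫∫ (f(y)-f(x))² min{π(x)q₁(x,y), π(y)q₁(y,x)} dx dy ≥ γ · (1/2)∫∫ (f(y)-f(x))² min{π(x)q₂(x,y), π(y)q₂(y,x)} dx dy; consequently Gap(P₁) ≥ γ·Gap(P₂). -/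
open MeasureTheory ENNReal

/-- The Dirichlet form of a Metropolis–Hastings chain on `ℝ^d` with target density `pi`
and proposal density `q`, applied to a test function `f`, written via the identity
`α(x,y)·π(x)q(x,y) = min{π(x)q(x,y), π(y)q(y,x)}`. -/
noncomputable def mhDirichletForm (d : ℕ) (pi : (Fin d → ℝ) → ℝ)
    (q : (Fin d → ℝ) → (Fin d → ℝ) → ℝ) (f : (Fin d → ℝ) → ℝ) : ℝ≥0∞ :=
  (1/2 : ℝ≥0∞) * ∫⁻ x, ∫⁻ y,
    ENNReal.ofReal ((f y - f x)^2 * min (pi x * q x y) (pi y * q y x))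

/-- The set of mean-zero, variance-one test functions with respect to the
target density `pi`. -/
def meanZeroVarOne (d : ℕ) (pi : (Fin d → ℝ) → ℝ) : Set ((Fin d → ℝ) → ℝ) :=
  {f | Measurable f ∧ (∫ x, f x * pi x) = 0 ∧ (∫ x, (f x)^2 * pi x) = 1}

/-- Comparison of Metropolis–Hastings Dirichlet forms and spectral gaps:
if the candidate densities satisfy `q₁(x,y) ≥ γ·q₂(x,y)` for all `x ≠ y`, then
for every mean-zero variance-one `f` the Dirichlet forms satisfy
`D₁(f) ≥ γ·D₂(f)`, and consequently `Gap(P₁) ≥ γ·Gap(P₂)`. -/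
theorem mh_spectral_gap_comparison (d : ℕ)
    (pi q₁ q₂ : _) (hpi : ∀ x : Fin d → ℝ, 0 ≤ pi x)
    (hq₁ : ∀ x y : Fin d → ℝ, 0 ≤ q₁ x y) (hq₂ : ∀ x y : Fin d → ℝ, 0 ≤ q₂ x y)
    (γ : ℝ) (hγ : 0 < γ)
    (hcomp : ∀ x y : Fin d → ℝ, x ≠ y → q₁ x y ≥ γ * q₂ x y) :
    (∀ f ∈ meanZeroVarOne d pi,
        mhDirichletForm d pi q₁ f ≥ ENNReal.ofReal γ * mhDirichletForm d pi q₂ f) ∧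
    (⨅ f ∈ meanZeroVarOne d pi, mhDirichletForm d pi q₁ f) ≥
      ENNReal.ofReal γ * ⨅ f ∈ meanZeroVarOne d pi, mhDirichletForm d pi q₂ f := by
  have key : ∀ f : (Fin d → ℝ) → ℝ,
      mhDirichletForm d pi q₁ f ≥ ENNReal.ofReal γ * mhDirichletForm d pi q₂ f := by
    intro f
    have hpt : ∀ x y : Fin d → ℝ,
        ENNReal.ofReal γ * ENNReal.ofReal ((f y - f x)^2 * min (pi x * q₂ x y) (pi y * q₂ y x))
          ≤ ENNReal.ofReal ((f y - f x)^2 * min (pi x * q₁ x y) (pi y * q₁ y x)) := by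
      intro x y
      by_cases hxy : x = y
      · subst hxy; simp
      · rw [← ENNReal.ofReal_mul hγ.le]
        apply ENNReal.ofReal_le_ofReal
        have h1 : γ * (pi x * q₂ x y) ≤ pi x * q₁ x y := by
          have := hcomp x y hxy
          nlinarith [hpi x, hq₂ x y]
        have h2 : γ * (pi y * q₂ y x) ≤ pi y * q₁ y x := by
          have := hcomp y x (Ne.symm hxy)
          nlinarith [hpi y, hq₂ y x]
        have hmin : γ * min (pi x * q₂ x y) (pi y * q₂ y x)
            ≤ min (pi x * q₁ x y) (pi y * q₁ y x) := by
          rcases min_cases (pi x * q₂ x y) (pi y * q₂ y x) with ⟨h, _⟩ | ⟨h, _⟩ <;>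
            rw [h] <;> [exact le_min h1 (le_trans (by nlinarith [hpi y, hq₂ y x, hq₂ x y]) h2);
              exact le_min (le_trans (by nlinarith [hpi x, hq₂ x y, hq₂ y x]) h1) h2]
        nlinarith [sq_nonneg (f y - f x), hmin, mul_le_mul_of_nonneg_left hmin (sq_nonneg (f y - f x))]
    unfold mhDirichletForm
    rw [show ENNReal.ofReal γ * ((1/2 : ℝ≥0∞) * _) = (1/2 : ℝ≥0∞) *
        (ENNReal.ofReal γ * ∫⁻ x, ∫⁻ y,
          ENNReal.ofReal ((f y - f x)^2 * min (pi x * q₂ x y) (pi y * q₂ y x))) by ring]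
    refine mul_le_mul_right ?_ _
    rw [← lintegral_const_mul' _ _ ENNReal.ofReal_ne_top]
    refine lintegral_mono fun x => ?_
    rw [← lintegral_const_mul' _ _ ENNReal.ofReal_ne_top]
    exact lintegral_mono fun y => hpt x y
  refine ⟨fun f _ => key f, ?_⟩
  refine le_iInf₂ fun f hf => ?_
  calc ENNReal.ofReal γ * ⨅ g ∈ meanZeroVarOne d pi, mhDirichletForm d pi q₂ g
      ≤ ENNReal.ofReal γ * mhDirichletForm d pi q₂ f :=
        mul_le_mul_right (iInf₂_le f hf) _
    _ ≤ mhDirichletForm d pi q₁ f := key f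
end

section
/- Suppose π₁ : ℝ → (0,∞) is a C¹ probability density such that there exist t, c ∈ (0,∞) and q ∈ [0,1) with |(d/dx) log π₁(x)| ≥ c|x|^q for all |x| ≥ t. Then there exists C ∈ (0,∞) such that π₁(x) ≤ C·exp(−c|x|^{1+q}/(1+q)) for all |x| ≥ t. -/
/-!
Since `π₁` is integrable, `log π₁` cannot increase on a half-line `[t, ∞)`; by Darboux's theorem
its derivative, which never vanishes there, is therefore negative, so `(log π₁)' ≤ -c x^q` for
`x ≥ t`.
Integrating, `log π₁ x + c x^{1+q}/(1+q)` is antitone on `[t, ∞)`, which is the bound on the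
right tail. The left tail is the right tail of `x ↦ π₁ (-x)`.
-/

open MeasureTheory Real Set

theorem not_integrableOn_Ici_of_monotoneOn {p : ℝ → ℝ} {a : ℝ} (ha : 0 < p a)
    (hp : MonotoneOn p (Ici a)) : ¬IntegrableOn p (Ici a) := by
  intro hint
  have hconst : IntegrableOn (fun _ => p a) (Ici a) :=
    hint.mono' aestronglyMeasurable_const <| (ae_restrict_mem measurableSet_Ici).mono
      fun y hy => by rw [norm_of_nonneg ha.le]; exact hp self_mem_Ici hy hy
  rw [integrableOn_const_iff, Real.volume_Ici] at hconst
  simp [ha.ne'] at hconst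

theorem deriv_log_neg_of_integrableOn_Ici {p : ℝ → ℝ} {t : ℝ} (hpos : ∀ x, 0 < p x)
    (hp : Differentiable ℝ p) (hint : IntegrableOn p (Ici t))
    (hne : ∀ x, t ≤ x → deriv (fun y => log (p y)) x ≠ 0) {x : ℝ} (hx : t ≤ x) :
    deriv (fun y => log (p y)) x < 0 := by
  have hlog : Differentiable ℝ fun y => log (p y) := hp.log fun y => (hpos y).ne'
  rcases hasDerivWithinAt_forall_lt_or_forall_gt_of_forall_ne (convex_Ici t)
    (fun y _ => (hlog y).hasDerivAt.hasDerivWithinAt) hne with hneg | hgt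
  · exact hneg x hx
  · refine absurd hint (not_integrableOn_Ici_of_monotoneOn (hpos t) fun y hy z hz hyz => ?_)
    have := monotoneOn_of_deriv_nonneg (convex_Ici t) hlog.continuous.continuousOn
      hlog.differentiableOn (fun w hw => (hgt w (interior_subset hw)).le) hy hz hyz
    exact (log_le_log_iff (hpos y) (hpos z)).mp this

theorem hasDerivAt_rpow_one_add_div {q : ℝ} (hq : 0 ≤ q) (x : ℝ) :
    HasDerivAt (fun y => y ^ (1 + q) / (1 + q)) (x ^ q) x := by
  refine ((hasDerivAt_rpow_const (p := 1 + q) (Or.inr (by linarith))).div_const _).congr_deriv ?_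
  rw [add_sub_cancel_left, mul_div_cancel_left₀ _ (by linarith)]

theorem antitoneOn_add_rpow_of_deriv_le {g : ℝ → ℝ} {q t c : ℝ} (hg : Differentiable ℝ g)
    (hq : 0 ≤ q) (hderiv : ∀ x, t < x → deriv g x ≤ -(c * x ^ q)) :
    AntitoneOn (fun x => g x + c * (x ^ (1 + q) / (1 + q))) (Ici t) := by
  have hd : ∀ x, HasDerivAt (fun x => g x + c * (x ^ (1 + q) / (1 + q)))
      (deriv g x + c * x ^ q) x := fun x =>
    (hg x).hasDerivAt.add ((hasDerivAt_rpow_one_add_div hq x).const_mul c)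
  refine antitoneOn_of_deriv_nonpos (convex_Ici t)
    (fun x _ => (hd x).continuousAt.continuousWithinAt)
    (fun x _ => (hd x).differentiableAt.differentiableWithinAt) fun x hx => ?_
  rw [interior_Ici] at hx
  rw [(hd x).deriv]
  linarith [hderiv x hx]

theorem le_mul_exp_of_le_abs_deriv_log {p : ℝ → ℝ} {q t c : ℝ} (hpos : ∀ x, 0 < p x)
    (hp : Differentiable ℝ p) (hint : IntegrableOn p (Ici t)) (hq : 0 ≤ q) (ht : 0 < t)
    (hc : 0 < c) (hgrad : ∀ x, t ≤ x → c * x ^ q ≤ |deriv (fun y => log (p y)) x|)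
    {x : ℝ} (hx : t ≤ x) :
    p x ≤ p t * exp (c * t ^ (1 + q) / (1 + q)) * exp (-c * x ^ (1 + q) / (1 + q)) := by
  have hneg : ∀ y, t ≤ y → deriv (fun y => log (p y)) y < 0 :=
    fun y => deriv_log_neg_of_integrableOn_Ici hpos hp hint fun z hz h0 => by
      have := hgrad z hz
      rw [h0, abs_zero] at this
      exact (mul_pos hc (rpow_pos_of_pos (ht.trans_le hz) q)).not_ge this
  have hderiv : ∀ y, t < y → deriv (fun y => log (p y)) y ≤ -(c * y ^ q) := fun y hy => by
    have := hgrad y hy.le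
    rw [abs_of_neg (hneg y hy.le)] at this
    linarith
  have hanti := antitoneOn_add_rpow_of_deriv_le (hp.log fun y => (hpos y).ne') hq hderiv
    self_mem_Ici hx hx
  have hlog :
      log (p x) ≤ log (p t) + c * t ^ (1 + q) / (1 + q) + -c * x ^ (1 + q) / (1 + q) := by
    rw [neg_mul, neg_div, mul_div_assoc, mul_div_assoc]
    linarith
  calc p x = exp (log (p x)) := (exp_log (hpos x)).symm
    _ ≤ _ := exp_le_exp.mpr hlog
    _ = _ := by rw [exp_add, exp_add, exp_log (hpos t)]

theorem light_tail_bound_general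
    (π₁ : ℝ → ℝ) (hpos : ∀ x, 0 < π₁ x) (hC1 : ContDiff ℝ 1 π₁)
    (hint : Integrable π₁)
    (q : ℝ) (hq0 : 0 ≤ q)
    (t c : ℝ) (ht : 0 < t) (hc : 0 < c)
    (hgrad : ∀ x : ℝ, t ≤ |x| →
      c * |x| ^ q ≤ |deriv (fun y => Real.log (π₁ y)) x|) :
    ∃ C : ℝ, 0 < C ∧ ∀ x : ℝ, t ≤ |x| →
      π₁ x ≤ C * Real.exp (-c * |x| ^ (1 + q) / (1 + q)) := by
  have hdiff : Differentiable ℝ π₁ := hC1.differentiable one_ne_zero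
  set K := exp (c * t ^ (1 + q) / (1 + q))
  have right : ∀ x, t ≤ x → π₁ x ≤ π₁ t * K * exp (-c * x ^ (1 + q) / (1 + q)) :=
    fun x => le_mul_exp_of_le_abs_deriv_log hpos hdiff hint.integrableOn hq0 ht hc
      fun y hy => by
        simpa only [abs_of_pos (ht.trans_le hy)] using hgrad y (hy.trans (le_abs_self y))
  have left : ∀ x, t ≤ x → π₁ (-x) ≤ π₁ (-t) * K * exp (-c * x ^ (1 + q) / (1 + q)) :=
    fun x => le_mul_exp_of_le_abs_deriv_log (p := fun y => π₁ (-y)) (fun y => hpos (-y))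
      (hdiff.comp differentiable_neg) hint.comp_neg.integrableOn hq0 ht hc fun y hy => by
        have hy' : |y| = y := abs_of_pos (ht.trans_le hy)
        simpa only [deriv_comp_neg (f := fun y => log (π₁ y)), abs_neg, hy'] using
          hgrad (-y) (by rwa [abs_neg, hy'])
  refine ⟨max (π₁ t) (π₁ (-t)) * K, mul_pos (lt_max_of_lt_left (hpos t)) (exp_pos _),
    fun x hx => ?_⟩
  rcases le_or_gt 0 x with hx0 | hx0
  · rw [abs_of_nonneg hx0] at hx ⊢
    refine (right x hx).trans ?_
    gcongr
    exact le_max_left _ _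
  · rw [abs_of_neg hx0] at hx ⊢
    refine (neg_neg x ▸ left (-x) hx).trans ?_
    gcongr
    exact le_max_right _ _

/-- If `π₁` is a `C¹` strictly positive probability density on `ℝ` whose
log-derivative satisfies `|(log π₁)'(x)| ≥ c|x|^q` for `|x| ≥ t`, with
`q ∈ [0,1)`, then `π₁(x) ≤ C·exp(−c|x|^{1+q}/(1+q))` for `|x| ≥ t`. -/
theorem light_tail_bound
    (π₁ : ℝ → ℝ) (hpos : ∀ x, 0 < π₁ x) (hC1 : ContDiff ℝ 1 π₁)
    (hint : Integrable π₁) (hprob : ∫ x, π₁ x = 1)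
    (q : ℝ) (hq0 : 0 ≤ q) (hq1 : q < 1)
    (t c : ℝ) (ht : 0 < t) (hc : 0 < c)
    (hgrad : ∀ x : ℝ, t ≤ |x| →
      c * |x| ^ q ≤ |deriv (fun y => Real.log (π₁ y)) x|) :
    ∃ C : ℝ, 0 < C ∧ ∀ x : ℝ, t ≤ |x| →
      π₁ x ≤ C * Real.exp (-c * |x| ^ (1 + q) / (1 + q)) :=
  light_tail_bound_general π₁ hpos hC1 hint q hq0 t c ht hc hgrad
end

section
/- Let x ∈ ℝ, let μ_σ be a symmetric density on ℝ, and let z ∼ μ_σ. Define b(x,z) = 1 with probability p(x,z) = 1/(1 + e^{−z·a}) and b(x,z) = −1 otherwise (where a = ∇log π(x)), and set y = x + b(x,z)·z. Then the density of y at x + z is 2·μ_σ(z)/(1 + e^{−a·z}); i.e., the algorithm samples from the Barker proposal Q^B(x, dy) = 2·μ_σ(y−x)/(1 + e^{−a(y−x)}) dy. -/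
open MeasureTheory Real

/-- Algorithm 1 samples from the Barker proposal: if `z ∼ μ_σ` (a symmetric
density) and, given `z`, we set `y = x + z` with probability
`p(x,z) = 1/(1+e^{−az})` and `y = x − z` otherwise, then the law of `y` has
density `y ↦ 2·μ_σ(y−x)/(1+e^{−a(y−x)})`: for every measurable set `A`, the
probability that `y ∈ A` equals the integral of that density over `A`. -/
theorem barker_proposal_sampling
    (μσ : ℝ → ℝ) (hμ_meas : Measurable μσ) (hμ_nonneg : ∀ z, 0 ≤ μσ z)
    (hμ_int : Integrable μσ) (hμ_prob : ∫ z, μσ z = 1)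
    (hμ_symm : ∀ z, μσ z = μσ (-z))
    (a x : ℝ) :
    ∀ A : Set ℝ, MeasurableSet A →
      ∫ z, (A.indicator (fun _ => (1:ℝ)) (x + z) * (1 / (1 + Real.exp (-a * z)))
            + A.indicator (fun _ => (1:ℝ)) (x - z)
              * (1 - 1 / (1 + Real.exp (-a * z)))) * μσ z
        = ∫ y in A, 2 * μσ (y - x) / (1 + Real.exp (-a * (y - x))) := by
  intro A hA
  set ind : ℝ → ℝ := A.indicator (fun _ => (1:ℝ)) with hind
  set p : ℝ → ℝ := fun z => 1 / (1 + Real.exp (-a * z)) with hp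
  have hden : ∀ z : ℝ, 0 < 1 + Real.exp (-a * z) := fun z => by positivity
  have hp_nonneg : ∀ z, 0 ≤ p z := fun z => by positivity
  have hp_le : ∀ z, p z ≤ 1 := fun z => by
    rw [hp, div_le_one (hden z)]
    linarith [Real.exp_pos (-a * z)]
  have hind_nonneg : ∀ y, 0 ≤ ind y := fun y =>
    Set.indicator_nonneg (fun _ _ => zero_le_one) y
  have hind_le : ∀ y, ind y ≤ 1 := fun y =>
    Set.indicator_le' (fun _ _ => le_refl 1) (fun _ _ => zero_le_one) y
  have hind_meas : Measurable ind := (measurable_const.indicator hA)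
  have hp_meas : Measurable p := by
    apply Measurable.div measurable_const
    exact (measurable_const.add ((measurable_const.mul measurable_id).exp))
  -- the two pieces
  set f : ℝ → ℝ := fun z => ind (x + z) * (p z * μσ z) with hf
  set g : ℝ → ℝ := fun z => ind (x - z) * ((1 - p z) * μσ z) with hg
  have hf_meas : Measurable f :=
    ((hind_meas.comp (measurable_const.add measurable_id)).mul (hp_meas.mul hμ_meas))
  have hg_meas : Measurable g :=
    ((hind_meas.comp (measurable_const.sub measurable_id)).mul
      ((measurable_const.sub hp_meas).mul hμ_meas))
  have hbound : ∀ (h : ℝ → ℝ), Measurable h → (∀ z, 0 ≤ h z) → (∀ z, h z ≤ μσ z) → Integrable h := by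
    intro h hm h0 h1
    refine hμ_int.mono' hm.aestronglyMeasurable (Filter.Eventually.of_forall fun z => ?_)
    rw [Real.norm_eq_abs, abs_of_nonneg (h0 z)]; exact h1 z
  have hf_int : Integrable f := by
    refine hbound f hf_meas (fun z => mul_nonneg (hind_nonneg _)
      (mul_nonneg (hp_nonneg z) (hμ_nonneg z))) (fun z => ?_)
    calc ind (x + z) * (p z * μσ z) ≤ 1 * (1 * μσ z) := by
          gcongr
          · exact mul_nonneg (hp_nonneg z) (hμ_nonneg z)
          · exact hind_le _
          · exact hμ_nonneg z
          · exact hp_le z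
      _ = μσ z := by ring
  have hg_int : Integrable g := by
    refine hbound g hg_meas (fun z => ?_) (fun z => ?_)
    · exact mul_nonneg (hind_nonneg _)
        (mul_nonneg (by linarith [hp_le z]) (hμ_nonneg z))
    · calc ind (x - z) * ((1 - p z) * μσ z) ≤ 1 * (1 * μσ z) := by
            gcongr
            · exact mul_nonneg (by linarith [hp_le z]) (hμ_nonneg z)
            · exact hind_le _
            · exact hμ_nonneg z
            · linarith [hp_nonneg z]
        _ = μσ z := by ring
  have hsplit : (fun z => (ind (x + z) * p z + ind (x - z) * (1 - p z)) * μσ z)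
      = fun z => f z + g z := by
    funext z; simp only [hf, hg]; ring
  rw [hsplit, integral_add hf_int hg_int]
  -- g integral equals f integral via z ↦ -z
  have hgf : ∫ z, g z = ∫ z, f z := by
    rw [← integral_neg_eq_self (fun z => g z)]
    congr 1; funext z
    have h1 : x - (-z) = x + z := by ring
    have h2 : 1 - p (-z) = p z := by
      simp only [hp, neg_mul, neg_neg]
      rw [Real.exp_neg]
      have ht := Real.exp_pos (a * z)
      field_simp
      ring
    simp only [hg, hf, h1, h2, ← hμ_symm z]
  rw [hgf]
  have hdouble : (∫ z, f z) + ∫ z, f z = ∫ z, 2 * f z := by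
    rw [integral_const_mul, two_mul]
  rw [hdouble]
  -- translation and indicator
  have hFf : (fun z => 2 * f z)
      = fun z => A.indicator (fun y => 2 * μσ (y - x) / (1 + Real.exp (-a * (y - x)))) (x + z) := by
    funext z
    have h3 : x + z - x = z := by ring
    simp only [hf, hind, Set.indicator, h3]
    by_cases hz : x + z ∈ A <;> simp [hz, hp] <;> ring
  rw [hFf, integral_add_left_eq_self _ x, integral_indicator hA]
end

section
/- Let π(x) = e^{ax+b} for a ≠ 0 on ℝ, let μ_σ be a symmetric density, let g : (0,∞) → (0,∞), and define the proposal density q(x,y) = Z⁻¹ g(e^{a(y−x)}) μ_σ(y−x) where Z = ∫ g(e^{aw}) μ_σ(w) dw. Then q satisfies detailed balance π(x)q(x,y) = π(y)q(y,x) for all x,y if and only if g(t) = t·g(1/t) for all t > 0. -/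
open MeasureTheory Real

/-!
Detailed balance for `π(x) = e^{ax+b}` and a kernel `q(x, y) = k(y - x)` depending only on the
increment reduces to the single-variable identity `k(w) = e^{aw} k(-w)`. For
`k(w) = Z⁻¹ g(e^{aw}) μ_σ(w)` the positive even factor `Z⁻¹ μ_σ(w)` cancels, leaving
`g(e^{aw}) = e^{aw} g(e^{-aw})`, which is the balancing identity at `t = e^{aw}`; since `a ≠ 0`,
`e^{aw}` ranges over all of `(0, ∞)`.
-/

theorem exp_affine_detailed_balance_iff (a b : ℝ) (k : ℝ → ℝ) :
    (∀ x y : ℝ, exp (a * x + b) * k (y - x) = exp (a * y + b) * k (x - y)) ↔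
      ∀ w, k w = exp (a * w) * k (-w) := by
  constructor
  · intro h w
    apply mul_left_cancel₀ (exp_pos b).ne'
    calc exp b * k w = exp (a * w + b) * k (-w) := by simpa using h 0 w
      _ = exp b * (exp (a * w) * k (-w)) := by rw [exp_add]; ring
  · intro h x y
    calc exp (a * x + b) * k (y - x)
        = exp (a * x + b + a * (y - x)) * k (x - y) := by
          rw [h (y - x), neg_sub, exp_add _ (a * (y - x)), mul_assoc]
      _ = exp (a * y + b) * k (x - y) := by ring_nf

theorem balancing_iff_forall_exp_mul {a : ℝ} (ha : a ≠ 0) (g : ℝ → ℝ) :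
    (∀ w, g (exp (a * w)) = exp (a * w) * g (exp (a * -w))) ↔
      ∀ t > (0 : ℝ), g t = t * g (1 / t) := by
  constructor
  · intro h t ht
    have hw := h (log t / a)
    rwa [mul_neg, mul_div_cancel₀ _ ha, exp_neg, exp_log ht, ← one_div] at hw
  · intro h w
    rw [h _ (exp_pos _), mul_neg, exp_neg, one_div]

theorem mul_even_weight_iff {f e m : ℝ → ℝ} (hm : ∀ w, m w ≠ 0) (hm_even : ∀ w, m w = m (-w))
    (c : ℝ) (hc : c ≠ 0) :
    (∀ w, c * f w * m w = e w * (c * f (-w) * m (-w))) ↔ ∀ w, f w = e w * f (-w) := by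
  refine forall_congr' fun w => ?_
  rw [← hm_even, show e w * (c * f (-w) * m w) = e w * f (-w) * (c * m w) by ring,
    show c * f w * m w = f w * (c * m w) by ring]
  exact mul_left_inj' (mul_ne_zero hc (hm w))

theorem first_order_exact_iff_balancing_general
    (a b : ℝ) (ha : a ≠ 0)
    (μσ : ℝ → ℝ) (hμ_pos : ∀ w, 0 < μσ w) (hμ_symm : ∀ w, μσ w = μσ (-w))
    (g : ℝ → ℝ)
    (Z : ℝ) (hZ_pos : 0 < Z) :
    (∀ x y : ℝ,
        Real.exp (a * x + b) * (Z⁻¹ * g (Real.exp (a * (y - x))) * μσ (y - x))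
          = Real.exp (a * y + b) * (Z⁻¹ * g (Real.exp (a * (x - y))) * μσ (x - y)))
      ↔ (∀ t > (0:ℝ), g t = t * g (1 / t)) :=
  (exp_affine_detailed_balance_iff a b fun w => Z⁻¹ * g (exp (a * w)) * μσ w).trans <|
    (mul_even_weight_iff (fun w => (hμ_pos w).ne') hμ_symm _ (inv_pos.mpr hZ_pos).ne').trans
      (balancing_iff_forall_exp_mul ha g)

/-- For a log-linear target `π(x) = e^{ax+b}` with `a ≠ 0`, a symmetric positive
density `μ_σ`, and proposal density `q(x,y) = Z⁻¹ g(e^{a(y−x)}) μ_σ(y−x)` with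
`Z = ∫ g(e^{aw}) μ_σ(w) dw`, the kernel `q` satisfies detailed balance with
respect to `π` if and only if `g(t) = t·g(1/t)` for all `t > 0`. -/
theorem first_order_exact_iff_balancing
    (a b : ℝ) (ha : a ≠ 0)
    (μσ : ℝ → ℝ) (hμ_pos : ∀ w, 0 < μσ w) (hμ_symm : ∀ w, μσ w = μσ (-w))
    (hμ_int : Integrable μσ) (hμ_prob : ∫ w, μσ w = 1)
    (g : ℝ → ℝ) (hg_pos : ∀ t > (0:ℝ), 0 < g t)
    (Z : ℝ) (hZ : Z = ∫ w, g (Real.exp (a * w)) * μσ w) (hZ_pos : 0 < Z) :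
    (∀ x y : ℝ,
        Real.exp (a * x + b) * (Z⁻¹ * g (Real.exp (a * (y - x))) * μσ (y - x))
          = Real.exp (a * y + b) * (Z⁻¹ * g (Real.exp (a * (x - y))) * μσ (x - y)))
      ↔ (∀ t > (0:ℝ), g t = t * g (1 / t)) :=
  first_order_exact_iff_balancing_general a b ha μσ hμ_pos hμ_symm g Z hZ_pos
end

section
/- Let g : (0,∞) → (0,∞) be three times continuously differentiable with g(t) = t·g(1/t) for all t > 0, and define b(s) = log g(e^s). Then b'(0) = 1/2, and for any twice continuously differentiable φ : ℝ → ℝ and x, u ∈ ℝ, the expansion φ(x+σu) − φ(x) + b(−φ'(x+σu)σu) − b(φ'(x)σu) has vanishing first- and second-order coefficients in σ: its first-order coefficient is (1 − 2b'(0))φ'(x)u = 0 and its second-order coefficient is (1 − 2b'(0))φ''(x)u²/2 = 0, so the expression is O(σ³) as σ → 0. -/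
/-!
Write `b = s/2 + e` with `e(s) = b(s) - s/2`; the balancing identity `b(s) = s + b(-s)` says
exactly that `e` is even, so `b'(0) = 1/2` and `e'(t) = O(t)`. With `h = σu`, `A = φ'(x+h)`,
`B = φ'(x)`, the log acceptance ratio splits as
`[φ(x+h) - φ(x) - h(A+B)/2] + [e(Ah) - e(Bh)]`.
The first bracket is the error of the trapezoidal rule, `O(h³)`. In the second, both arguments
are `O(h)` and differ by `(A - B)h = O(h²)`, so the mean value theorem with `e' = O(h)` on the
segment between them gives `O(h) · O(h²)`.
-/

open Real Asymptotics Filter Topology Set Metric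

section Asymptotics

variable {E : Type*} [NormedAddCommGroup E] [NormedSpace ℝ E]

theorem isBigO_pow_succ_of_hasDerivAt {f f' : ℝ → E} {x₀ : ℝ} {n : ℕ}
    (hff' : ∀ᶠ x in 𝓝 x₀, HasDerivAt f (f' x) x) (hf' : f' =O[𝓝 x₀] fun x => (x - x₀) ^ n) :
    (fun x => f x - f x₀) =O[𝓝 x₀] fun x => (x - x₀) ^ (n + 1) := by
  obtain ⟨C, hC⟩ := hf'.bound
  obtain ⟨δ, hδ, hball⟩ := eventually_nhds_iff_ball.mp (hff'.and hC)
  refine IsBigO.of_bound |C| ?_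
  filter_upwards [ball_mem_nhds x₀ hδ] with x hx
  have hseg : uIcc x₀ x ⊆ ball x₀ δ := by
    rw [← segment_eq_uIcc]
    exact (convex_ball x₀ δ).segment_subset (mem_ball_self hδ) hx
  have bound : ∀ y ∈ uIcc x₀ x, ‖f' y‖ ≤ |C| * |x - x₀| ^ n := fun y hy => calc
    ‖f' y‖ ≤ C * ‖(y - x₀) ^ n‖ := (hball y (hseg hy)).2
    _ ≤ |C| * |y - x₀| ^ n := by rw [norm_pow, norm_eq_abs]; gcongr; exact le_abs_self C
    _ ≤ |C| * |x - x₀| ^ n := mul_le_mul_of_nonneg_left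
          (pow_le_pow_left₀ (abs_nonneg _) (abs_sub_left_of_mem_uIcc hy) n) (abs_nonneg C)
  calc ‖f x - f x₀‖
      ≤ |C| * |x - x₀| ^ n * ‖x - x₀‖ :=
        (convex_uIcc x₀ x).norm_image_sub_le_of_norm_hasDerivWithin_le
          (fun y hy => (hball y (hseg hy)).1.hasDerivWithinAt) bound left_mem_uIcc right_mem_uIcc
    _ = |C| * ‖(x - x₀) ^ (n + 1)‖ := by rw [norm_pow, norm_eq_abs, pow_succ, mul_assoc]

theorem DifferentiableAt.isBigO_comp_add_sub {F : Type*} [NormedAddCommGroup F]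
    [NormedSpace ℝ F] {k : E → F} {x : E} (hk : DifferentiableAt ℝ k x) :
    (fun h => k (x + h) - k x) =O[𝓝 0] fun h => h := by
  have hshift : Tendsto (fun h : E => x + h) (𝓝 0) (𝓝 x) := by
    simpa using (continuous_const_add x).tendsto 0
  simpa [Function.comp_def] using hk.isBigO_sub.comp_tendsto hshift

theorem isBigO_comp_sub_comp {f f' : ℝ → E} (hff' : ∀ᶠ t in 𝓝 0, HasDerivAt f (f' t) t)
    (hf' : f' =O[𝓝 0] fun t => t) {α : Type*} {l : Filter α} {y z r s : α → ℝ}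
    (hr : Tendsto r l (𝓝 0)) (hy : y =O[l] r) (hz : z =O[l] r)
    (hyz : (fun a => y a - z a) =O[l] s) :
    (fun a => f (y a) - f (z a)) =O[l] fun a => r a * s a := by
  obtain ⟨C, hC⟩ := hf'.bound
  obtain ⟨δ, hδ, hball⟩ := eventually_nhds_iff_ball.mp (hff'.and hC)
  obtain ⟨Ky, hKy⟩ := hy.bound
  obtain ⟨Kz, hKz⟩ := hz.bound
  obtain ⟨K, hK⟩ := hyz.bound
  set M := |Ky| + |Kz|
  have hsmall : ∀ᶠ a in l, M * ‖r a‖ < δ := by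
    have : Tendsto (fun a => M * ‖r a‖) l (𝓝 0) := by simpa using hr.norm.const_mul M
    exact this.eventually_lt_const hδ
  refine IsBigO.of_bound (|C| * M * |K|) ?_
  filter_upwards [hKy, hKz, hK, hsmall] with a hya hza hyza ha
  have hy_mem : y a ∈ closedBall 0 (M * ‖r a‖) := mem_closedBall_zero_iff.mpr <| hya.trans <| by
    gcongr; exact (le_abs_self Ky).trans (le_add_of_nonneg_right (abs_nonneg Kz))
  have hz_mem : z a ∈ closedBall 0 (M * ‖r a‖) := mem_closedBall_zero_iff.mpr <| hza.trans <| by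
    gcongr; exact (le_abs_self Kz).trans (le_add_of_nonneg_left (abs_nonneg Ky))
  have hsub : closedBall (0 : ℝ) (M * ‖r a‖) ⊆ ball 0 δ := closedBall_subset_ball ha
  have bound : ∀ t ∈ closedBall (0 : ℝ) (M * ‖r a‖), ‖f' t‖ ≤ |C| * (M * ‖r a‖) :=
    fun t ht => calc
      ‖f' t‖ ≤ C * ‖t‖ := (hball t (hsub ht)).2
      _ ≤ |C| * (M * ‖r a‖) := by
        gcongr
        · exact le_abs_self C
        · exact mem_closedBall_zero_iff.mp ht
  calc ‖f (y a) - f (z a)‖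
      ≤ |C| * (M * ‖r a‖) * ‖y a - z a‖ :=
        (convex_closedBall 0 _).norm_image_sub_le_of_norm_hasDerivWithin_le
          (fun t ht => (hball t (hsub ht)).1.hasDerivWithinAt) bound hz_mem hy_mem
    _ ≤ |C| * (M * ‖r a‖) * (|K| * ‖s a‖) := by
        gcongr
        exact hyza.trans (by gcongr; exact le_abs_self K)
    _ = |C| * M * |K| * ‖r a * s a‖ := by rw [norm_mul]; ring

end Asymptotics

theorem isBigO_taylor_one {g g' : ℝ → ℝ} {x : ℝ} (hg : ∀ t, HasDerivAt g (g' t) t)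
    (hg' : DifferentiableAt ℝ g' x) :
    (fun h => g (x + h) - g x - h * g' x) =O[𝓝 0] fun h => h ^ 2 := by
  have hderiv : ∀ h, HasDerivAt (fun h => g (x + h) - h * g' x) (g' (x + h) - g' x) h := by
    intro h
    simpa using ((hg (x + h)).comp_const_add x h).fun_sub (hasDerivAt_mul_const (g' x))
  refine (isBigO_pow_succ_of_hasDerivAt (x₀ := 0) (n := 1) (.of_forall hderiv)
    (by simpa using hg'.isBigO_comp_add_sub)).congr' ?_ ?_
  · filter_upwards with h
    simp only [add_zero, zero_mul, sub_zero]
    ring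
  · filter_upwards with h
    simp

theorem trapezoid_error_isBigO {f : ℝ → ℝ} (hf : ContDiff ℝ 3 f) (x : ℝ) :
    (fun h => f (x + h) - f x - h * (deriv f x + deriv f (x + h)) / 2) =O[𝓝 0]
      fun h => h ^ 3 := by
  have hf₁ : ∀ t, HasDerivAt f (deriv f t) t := fun t =>
    (hf.differentiable (by norm_num) t).hasDerivAt
  have hf₂ : ∀ t, HasDerivAt (deriv f) (deriv (deriv f) t) t := fun t =>
    ((hf.deriv' (n := 2)).differentiable (by norm_num) t).hasDerivAt
  have hf₃ : DifferentiableAt ℝ (deriv (deriv f)) x :=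
    ((hf.deriv' (n := 2)).deriv' (n := 1)).differentiable one_ne_zero x
  have hderiv : ∀ h, HasDerivAt (fun h => f (x + h) - f x - h * (deriv f x + deriv f (x + h)) / 2)
      (((deriv f (x + h) - deriv f x - h * deriv (deriv f) x)
        - h * (deriv (deriv f) (x + h) - deriv (deriv f) x)) / 2) h := by
    intro h
    have := (((hf₁ (x + h)).comp_const_add x h).sub_const (f x)).fun_sub
      (((hasDerivAt_id' h).fun_mul
        (((hf₂ (x + h)).comp_const_add x h).const_add (deriv f x))).div_const 2)
    exact this.congr_deriv (by ring)
  have hrem : (fun h => h * (deriv (deriv f) (x + h) - deriv (deriv f) x)) =O[𝓝 0]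
      fun h => h ^ 2 := by
    simpa [sq] using (isBigO_refl (fun h : ℝ => h) _).mul hf₃.isBigO_comp_add_sub
  have hderiv_small : (fun h => ((deriv f (x + h) - deriv f x - h * deriv (deriv f) x)
        - h * (deriv (deriv f) (x + h) - deriv (deriv f) x)) / 2) =O[𝓝 0] fun h => h ^ 2 :=
    (((isBigO_taylor_one hf₂ hf₃).sub hrem).const_mul_left (1 / 2)).congr_left fun h => by ring
  simpa using isBigO_pow_succ_of_hasDerivAt (x₀ := 0) (n := 2) (.of_forall hderiv)
    (by simpa using hderiv_small)

theorem Function.Even.deriv_zero {f : ℝ → ℝ} (hf : Function.Even f) : deriv f 0 = 0 := by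
  have h := deriv_comp_neg f (0 : ℝ)
  rw [show (fun x => f (-x)) = f from funext hf, neg_zero] at h
  linarith

section Balancing

variable {b : ℝ → ℝ}

theorem even_sub_half_of_balanced (hbal : ∀ s, b s = s + b (-s)) :
    Function.Even fun s => b s - s / 2 := fun s => by
  show b (-s) - -s / 2 = b s - s / 2
  linarith [hbal s]

theorem deriv_zero_of_balanced (hbal : ∀ s, b s = s + b (-s)) (hb : DifferentiableAt ℝ b 0) :
    deriv b 0 = 1 / 2 := by
  have h := (even_sub_half_of_balanced hbal).deriv_zero
  rw [deriv_fun_sub hb (by fun_prop), deriv_div_const, deriv_id''] at h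
  linarith

theorem log_acceptance_isBigO (hb : ContDiff ℝ 2 b) (hbal : ∀ s, b s = s + b (-s))
    {φ : ℝ → ℝ} (hφ : ContDiff ℝ 3 φ) (x : ℝ) :
    (fun h => φ (x + h) - φ x + b (-deriv φ (x + h) * h) - b (deriv φ x * h)) =O[𝓝 0]
      fun h => h ^ 3 := by
  set e : ℝ → ℝ := fun s => b s - s / 2
  have heven : Function.Even e := even_sub_half_of_balanced hbal
  have hsplit : ∀ h, φ (x + h) - φ x + b (-deriv φ (x + h) * h) - b (deriv φ x * h)
      = (φ (x + h) - φ x - h * (deriv φ x + deriv φ (x + h)) / 2)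
        + (e (deriv φ (x + h) * h) - e (deriv φ x * h)) := by
    intro h
    have := heven (deriv φ (x + h) * h)
    simp only [e] at this ⊢
    rw [neg_mul]
    linarith
  have he : ContDiff ℝ 2 e := hb.sub (by fun_prop)
  have he₁ : ∀ t, HasDerivAt e (deriv e t) t := fun t =>
    (he.differentiable (by norm_num) t).hasDerivAt
  have he' : deriv e =O[𝓝 0] fun t => t := by
    simpa [heven.deriv_zero] using
      ((he.deriv' (n := 1)).differentiable one_ne_zero 0).isBigO_comp_add_sub
  have hφ' : Differentiable ℝ (deriv φ) := (hφ.deriv' (n := 2)).differentiable (by norm_num)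
  have hA : (fun h => deriv φ (x + h)) =O[𝓝 0] fun _ => (1 : ℝ) :=
    ((hφ'.continuous.comp (continuous_const_add x)).continuousAt (x := 0)).isBigO_one ℝ
  have heven_part := isBigO_comp_sub_comp (.of_forall he₁) he' (r := fun h => h) tendsto_id
    (by simpa using hA.mul (isBigO_refl (fun h : ℝ => h) _))
    (isBigO_const_mul_self (deriv φ x) _ _)
    (s := fun h => h ^ 2)
    (by simpa [← sub_mul, sq] using (hφ' x).isBigO_comp_add_sub.mul (isBigO_refl _ _))
  refine ((trapezoid_error_isBigO hφ x).add ?_).congr_left fun h => (hsplit h).symm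
  simpa [← pow_succ'] using heven_part

end Balancing

section LogComposition

variable {g : ℝ → ℝ}

theorem contDiff_log_comp_exp {n : ℕ} (hg_pos : ∀ t > (0 : ℝ), 0 < g t)
    (hg : ContDiffOn ℝ n g (Ioi 0)) : ContDiff ℝ n fun s => log (g (exp s)) :=
  contDiff_iff_contDiffAt.mpr fun s => show ContDiffAt ℝ n (log ∘ g ∘ exp) s from
    (contDiffAt_log.mpr (hg_pos _ (exp_pos s)).ne').comp s
      ((hg.contDiffAt (isOpen_Ioi.mem_nhds (exp_pos s))).comp s contDiff_exp.contDiffAt)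

theorem log_comp_exp_balanced (hg_pos : ∀ t > (0 : ℝ), 0 < g t)
    (hbal : ∀ t > (0 : ℝ), g t = t * g (1 / t)) (s : ℝ) :
    log (g (exp s)) = s + log (g (exp (-s))) := by
  rw [hbal _ (exp_pos s), one_div, ← exp_neg,
    log_mul (exp_ne_zero s) (hg_pos _ (exp_pos _)).ne', log_exp]

end LogComposition

/-- For a `C³` balancing function `g` with `g(t) = t·g(1/t)`, the function
`b(s) = log g(e^s)` satisfies `b'(0) = 1/2`, and for any sufficiently smooth
`φ` the log-acceptance-rate expansion
`φ(x+σu) − φ(x) + b(−φ'(x+σu)σu) − b(φ'(x)σu)` has vanishing first- and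
second-order terms, hence is `O(σ³)` as `σ → 0`. -/
theorem third_order_acceptance_expansion
    (g : ℝ → ℝ) (hg_pos : ∀ t > (0:ℝ), 0 < g t)
    (hg_smooth : ContDiffOn ℝ 3 g (Set.Ioi 0))
    (hbal : ∀ t > (0:ℝ), g t = t * g (1 / t))
    (φ : ℝ → ℝ) (hφ : ContDiff ℝ 3 φ) :
    deriv (fun s => Real.log (g (Real.exp s))) 0 = 1 / 2 ∧
    (∀ x u : ℝ,
      (1 - 2 * deriv (fun s => Real.log (g (Real.exp s))) 0) * deriv φ x * u = 0 ∧
      (1 - 2 * deriv (fun s => Real.log (g (Real.exp s))) 0)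
          * deriv (deriv φ) x * u ^ 2 / 2 = 0) ∧
    ∀ x u : ℝ,
      (fun σ : ℝ =>
          φ (x + σ * u) - φ x
            + Real.log (g (Real.exp (-(deriv φ (x + σ * u)) * σ * u)))
            - Real.log (g (Real.exp (deriv φ x * σ * u))))
        =O[nhds (0:ℝ)] fun σ => σ ^ 3 := by
  have hb : ContDiff ℝ 3 fun s => log (g (exp s)) := contDiff_log_comp_exp hg_pos hg_smooth
  have hb_bal := log_comp_exp_balanced hg_pos hbal
  have hb₀ := deriv_zero_of_balanced hb_bal (hb.differentiable (by norm_num) 0)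
  refine ⟨hb₀, fun x u => by simp [hb₀], fun x u => ?_⟩
  have hstep : Tendsto (fun σ : ℝ => σ * u) (𝓝 0) (𝓝 0) := by
    simpa using (continuous_mul_const u).tendsto 0
  have hcube : (fun σ : ℝ => (σ * u) ^ 3) =O[𝓝 0] fun σ => σ ^ 3 :=
    (isBigO_const_mul_self (u ^ 3) _ _).congr_left fun σ => by ring
  simpa only [Function.comp_def, mul_assoc] using
    ((log_acceptance_isBigO (hb.of_le (by norm_num)) hb_bal hφ x).comp_tendsto hstep).trans hcube
end
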